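/- Let G be a graph with λ_3(G) = k ≥ 2 and S = {x, y, z} a set of three distinct vertices of G. Then there exist k − 2 pairwise edge-disjoint S-Steiner trees T_1, …, T_{k−2} such that no tree T_i uses any edge of the induced subgraph G[S] (i.e., no edge with both endpoints in S). -/

import Mathlib

open Classical

variable {V W : Type*}

/-- An `S`-Steiner tree: a subgraph of `G` that is a tree and contains `S`. -/
def IsSteinerTree (G : SimpleGraph V) (S : Set V) (T : G.Subgraph) : Prop :=
  S ⊆ T.verts ∧ T.coe.IsTree

/-- There exist `n` pairwise edge-disjoint `S`-Steiner trees in `G`. -/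
def HasSteinerPacking (G : SimpleGraph V) (S : Set V) (n : ℕ) : Prop :=
  ∃ T : Fin n → G.Subgraph, (∀ i, IsSteinerTree G S (T i)) ∧
    ∀ i j, i ≠ j → (T i).edgeSet ∩ (T j).edgeSet = ∅

/-- `λ(S)`: maximum number of pairwise edge-disjoint `S`-Steiner trees. -/
noncomputable def steinerNum (G : SimpleGraph V) (S : Set V) : ℕ :=
  sSup {n | HasSteinerPacking G S n}

/-- Generalized `k`-edge-connectivity `λ_k(G)`. -/
noncomputable def genEdgeConn (G : SimpleGraph V) (k : ℕ) : ℕ :=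
  sInf {m | ∃ S : Set V, S.Finite ∧ S.ncard = k ∧ steinerNum G S = m}

/-- Edge-connectivity: minimum number of edges whose deletion disconnects `G`. -/
noncomputable def edgeConn (G : SimpleGraph V) : ℕ :=
  sInf {m | ∃ F : Set (Sym2 V), F ⊆ G.edgeSet ∧ F.ncard = m ∧ ¬ (G.deleteEdges F).Connected}

/-- Degree of a vertex as the cardinality of its neighbor set. -/
noncomputable def degOf (G : SimpleGraph V) (v : V) : ℕ :=
  (G.neighborSet v).ncard

/-- Minimum degree. -/
noncomputable def minDeg (G : SimpleGraph V) : ℕ :=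
  sInf {d | ∃ v, degOf G v = d}

/-- The lexicographic product `G ∘ H`. -/
def lexProd (G : SimpleGraph V) (H : SimpleGraph W) : SimpleGraph (V × W) where
  Adj p q := G.Adj p.1 q.1 ∨ (p.1 = q.1 ∧ H.Adj p.2 q.2)
  symm := by
    constructor
    rintro p q (h | ⟨h1, h2⟩)
    · exact Or.inl h.symm
    · exact Or.inr ⟨h1.symm, h2.symm⟩
  loopless := by
    constructor
    rintro p (h | ⟨_, h⟩)
    · exact G.loopless.irrefl _ h
    · exact H.loopless.irrefl _ h

/-
λ₃(G) ≥ k yields k edge-disjoint {x, y, z}-Steiner trees. Each of the three possible edges of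
G[{x, y, z}] lies in at most one of them, so at most three trees meet G[{x, y, z}], and if at most
two do, the remaining ones suffice. If three do, each of them contains exactly one of the three
edges, and deleting it from its tree leaves the opposite vertex joined to one of its ends. Hence
x, y, z lie in one component of the union of these three trees with the edges of G[{x, y, z}]
removed, and a spanning tree of that component replaces the three trees.
-/

open Function SimpleGraph

namespace SimpleGraph

variable {G : SimpleGraph V}

lemma Walk.reachable_deleteEdges_or {a x : V} (y : V) (p : G.Walk a x) :
    (G.deleteEdges {s(x, y)}).Reachable a x ∨ (G.deleteEdges {s(x, y)}).Reachable a y := by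
  induction p with
  | nil => exact Or.inl .rfl
  | @cons a c x hac _ ih =>
    by_cases he : s(a, c) = s(x, y)
    · rcases Sym2.eq_iff.1 he with ⟨hax, -⟩ | ⟨hay, -⟩
      · exact Or.inl (hax ▸ .rfl)
      · exact Or.inr (hay ▸ .rfl)
    · have hadj : (G.deleteEdges {s(x, y)}).Adj a c := (deleteEdges_adj ..).2 ⟨hac, he⟩
      exact ih.imp hadj.reachable.trans hadj.reachable.trans

lemma Subgraph.Connected.reachable_spanningCoe {H : G.Subgraph} (hH : H.Connected) {u v : V}
    (hu : u ∈ H.verts) (hv : v ∈ H.verts) : H.spanningCoe.Reachable u v :=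
  (hH ⟨u, hu⟩ ⟨v, hv⟩).map ⟨Subtype.val, id⟩

lemma Subgraph.Connected.reachable_deleteEdges_or {T : G.Subgraph} (hT : T.Connected)
    {a b c : V} (ha : a ∈ T.verts) (hc : c ∈ T.verts) {E : Set (Sym2 V)}
    (hE : T.edgeSet ∩ E ⊆ {s(a, b)}) :
    (T.spanningCoe.deleteEdges E).Reachable c a ∨
      (T.spanningCoe.deleteEdges E).Reachable c b := by
  have hle : T.spanningCoe.deleteEdges {s(a, b)} ≤ T.spanningCoe.deleteEdges E := by
    intro u v huv
    obtain ⟨huv, hne⟩ := (SimpleGraph.deleteEdges_adj ..).1 huv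
    exact (SimpleGraph.deleteEdges_adj ..).2 ⟨huv, fun huvE => hne (hE ⟨huv, huvE⟩)⟩
  obtain ⟨p⟩ := hT.reachable_spanningCoe hc ha
  exact (p.reachable_deleteEdges_or b).imp (·.mono hle) (·.mono hle)

lemma Connected.exists_subgraph_isTree {s : Set V} {C : SimpleGraph s} (hC : C.Connected)
    (hCG : ∀ {a b : s}, C.Adj a b → G.Adj a b) :
    ∃ T : G.Subgraph, T.verts = s ∧ T.coe.IsTree ∧
      ∀ a b, T.Adj a b → ∃ (ha : a ∈ s) (hb : b ∈ s), C.Adj ⟨a, ha⟩ ⟨b, hb⟩ := by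
  obtain ⟨T, hTC, hT⟩ := hC.exists_isTree_le
  refine ⟨{ verts := s
            Adj := fun a b => ∃ (ha : a ∈ s) (hb : b ∈ s), T.Adj ⟨a, ha⟩ ⟨b, hb⟩
            adj_sub := fun ⟨_, _, h⟩ => hCG (hTC h)
            edge_vert := fun ⟨ha, _⟩ => ha
            symm := ⟨fun _ _ ⟨ha, hb, h⟩ => ⟨hb, ha, h.symm⟩⟩ }, rfl, ?_,
    fun _ _ ⟨ha, hb, h⟩ => ⟨ha, hb, hTC h⟩⟩
  convert hT
  ext ⟨a, ha⟩ ⟨b, hb⟩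
  exact ⟨fun ⟨_, _, h⟩ => h, fun h => ⟨ha, hb, h⟩⟩

lemma reachable_of_triangle {H : SimpleGraph V} {x y z : V}
    (hz : H.Reachable z x ∨ H.Reachable z y) (hy : H.Reachable y x ∨ H.Reachable y z)
    (hx : H.Reachable x y ∨ H.Reachable x z) : H.Reachable x y ∧ H.Reachable x z := by
  rcases hz with hzx | hzy <;> rcases hy with hyx | hyz
  · exact ⟨hyx.symm, hzx.symm⟩
  · exact ⟨(hyz.trans hzx).symm, hzx.symm⟩
  · exact ⟨hyx.symm, (hzy.trans hyx).symm⟩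
  · rcases hx with hxy | hxz
    · exact ⟨hxy, hxy.trans hzy.symm⟩
    · exact ⟨hxz.trans hyz.symm, hxz⟩

end SimpleGraph

lemma exists_isSteinerTree_le {G H : SimpleGraph V} (hHG : H ≤ G) {S : Set V} {s : V}
    (hS : ∀ v ∈ S, H.Reachable s v) :
    ∃ T : G.Subgraph, IsSteinerTree G S T ∧ T.spanningCoe ≤ H := by
  obtain ⟨T, hTv, hT, hTH⟩ :=
    (H.connectedComponentMk s).connected_toSimpleGraph.exists_subgraph_isTree (fun h => hHG h)
  refine ⟨T, ⟨fun v hv => ?_, hT⟩, fun a b h => ?_⟩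
  · rw [hTv]
    exact ConnectedComponent.sound (hS v hv).symm
  · obtain ⟨_, _, h⟩ := hTH a b h
    exact h

lemma HasSteinerPacking.mono {G : SimpleGraph V} {S : Set V} {m n : ℕ}
    (h : HasSteinerPacking G S n) (hmn : m ≤ n) : HasSteinerPacking G S m := by
  obtain ⟨T, hT, hdisj⟩ := h
  exact ⟨fun i => T (Fin.castLE hmn i), fun i => hT _,
    fun i j hij => hdisj _ _ ((Fin.castLE_injective hmn).ne hij)⟩

lemma hasSteinerPacking_of_le_steinerNum {G : SimpleGraph V} {S : Set V} {k : ℕ}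
    (hk : k ≤ steinerNum G S) : HasSteinerPacking G S k := by
  have h0 : HasSteinerPacking G S 0 := ⟨Fin.elim0, fun i => i.elim0, fun i => i.elim0⟩
  by_cases hbdd : BddAbove {n | HasSteinerPacking G S n}
  · exact (Nat.sSup_mem ⟨0, h0⟩ hbdd).mono hk
  · obtain ⟨n, hn, hkn⟩ := not_bddAbove_iff.1 hbdd k
    exact hn.mono hkn.le

lemma genEdgeConn_le_steinerNum (G : SimpleGraph V) {S : Set V} (hS : S.Finite) :
    genEdgeConn G S.ncard ≤ steinerNum G S :=
  Nat.sInf_le ⟨S, hS, rfl, rfl⟩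

lemma exists_fin_subfamily {G : SimpleGraph V} {ι : Type*} [Fintype ι] {n : ℕ}
    (hn : n ≤ Fintype.card ι) (P : G.Subgraph → Prop) {T : ι → G.Subgraph}
    (hP : ∀ i, P (T i))
    (hT : Pairwise (Disjoint on fun i => (T i).edgeSet)) :
    ∃ T' : Fin n → G.Subgraph, (∀ i, P (T' i)) ∧
      Pairwise (Disjoint on fun i => (T' i).edgeSet) := by
  obtain ⟨e⟩ := Embedding.nonempty_of_card_le (α := Fin n) (by simpa using hn)
  exact ⟨T ∘ e, fun i => hP _, hT.comp_of_injective e.injective⟩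

lemma Pairwise.option_elim {α β ι : Type*} [PartialOrder β] [OrderBot β] {g : α → β}
    {f : ι → α} (hf : Pairwise (Disjoint on fun i => g (f i))) {a : α}
    (ha : ∀ i, Disjoint (g a) (g (f i))) :
    Pairwise (Disjoint on fun o : Option ι => g (o.elim a f)) := by
  rintro (_ | i) (_ | j) hij
  · exact absurd rfl hij
  · exact ha j
  · exact (ha i).symm
  · exact hf (fun h => hij (congrArg some h))

section EdgeDisjointFamily

variable {G : SimpleGraph V} {ι : Type*} [Fintype ι] (T : ι → G.Subgraph) (E : Finset (Sym2 V))

noncomputable def meetingIndices : Finset ι :=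
  Finset.univ.filter fun i => ¬ Disjoint (T i).edgeSet E

variable {T}

lemma exists_injective_meetingIndices (hT : Pairwise (Disjoint on fun i => (T i).edgeSet)) :
    ∃ f : meetingIndices T E → E, Injective f ∧
      ∀ i, (f i : Sym2 V) ∈ (T i.1).edgeSet := by
  have hmeet (i : ι) (hi : i ∈ meetingIndices T E) : ∃ e, e ∈ E ∧ e ∈ (T i).edgeSet := by
    simpa [meetingIndices, Set.not_disjoint_iff, and_comm] using hi
  choose f hfE hfT using hmeet
  refine ⟨fun i => ⟨f i i.2, hfE _ _⟩, fun i j hij => ?_, fun i => hfT _ _⟩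
  have hfij : f i i.2 = f j j.2 := congrArg Subtype.val hij
  by_contra hne
  exact Set.disjoint_left.1 (hT (Subtype.coe_ne_coe.2 hne)) (hfT _ i.2) (hfij ▸ hfT _ j.2)

lemma card_meetingIndices_le (hT : Pairwise (Disjoint on fun i => (T i).edgeSet)) :
    (meetingIndices T E).card ≤ E.card := by
  obtain ⟨f, hf, -⟩ := exists_injective_meetingIndices E hT
  exact Finset.card_le_card_of_injective hf

lemma exists_edgeSet_inter_subset_singleton
    (hT : Pairwise (Disjoint on fun i => (T i).edgeSet))
    (hcard : E.card ≤ (meetingIndices T E).card) {e : Sym2 V} (he : e ∈ E) :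
    ∃ i ∈ meetingIndices T E, e ∈ (T i).edgeSet ∧ (T i).edgeSet ∩ E ⊆ {e} := by
  obtain ⟨f, hinj, hfT⟩ := exists_injective_meetingIndices E hT
  have hsurj : Surjective f := ((Fintype.bijective_iff_injective_and_card f).2
    ⟨hinj, by simpa using (card_meetingIndices_le E hT).antisymm hcard⟩).2
  obtain ⟨i, hi⟩ := hsurj ⟨e, he⟩
  have hfi : (f i : Sym2 V) = e := congrArg Subtype.val hi
  refine ⟨i, i.2, hfi ▸ hfT i, fun e' ⟨he'T, he'E⟩ => ?_⟩
  obtain ⟨j, hj⟩ := hsurj ⟨e', he'E⟩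
  have hfj : (f j : Sym2 V) = e' := congrArg Subtype.val hj
  obtain rfl : j = i := by
    by_contra hne
    exact Set.disjoint_left.1 (hT (Subtype.coe_ne_coe.2 hne)) (hfj ▸ hfT j) he'T
  exact hfj.symm.trans hfi

end EdgeDisjointFamily

section Triangle

variable {G : SimpleGraph V} {x y z : V}

noncomputable def triangleEdges (x y z : V) : Finset (Sym2 V) := {s(x, y), s(x, z), s(y, z)}

lemma card_triangleEdges (hxy : x ≠ y) (hxz : x ≠ z) (hyz : y ≠ z) :
    (triangleEdges x y z).card = 3 := by
  simp [triangleEdges, Finset.card_insert_of_notMem, hxy, hxz, hyz, hxy.symm, hyz.symm]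

lemma mk_mem_triangleEdges {a b : V} (ha : a ∈ ({x, y, z} : Set V))
    (hb : b ∈ ({x, y, z} : Set V)) (hab : a ≠ b) : s(a, b) ∈ triangleEdges x y z := by
  rcases ha with rfl | rfl | rfl <;> rcases hb with rfl | rfl | rfl <;>
    simp_all [triangleEdges, Sym2.eq_swap]

lemma exists_isSteinerTree_disjoint_triangleEdges {T₁ T₂ T₃ : G.Subgraph}
    (h₁ : IsSteinerTree G {x, y, z} T₁) (h₂ : IsSteinerTree G {x, y, z} T₂)
    (h₃ : IsSteinerTree G {x, y, z} T₃)
    (e₁ : T₁.edgeSet ∩ triangleEdges x y z ⊆ {s(x, y)})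
    (e₂ : T₂.edgeSet ∩ triangleEdges x y z ⊆ {s(x, z)})
    (e₃ : T₃.edgeSet ∩ triangleEdges x y z ⊆ {s(y, z)}) :
    ∃ T₀ : G.Subgraph, IsSteinerTree G {x, y, z} T₀ ∧
      T₀.edgeSet ⊆ T₁.edgeSet ∪ T₂.edgeSet ∪ T₃.edgeSet ∧
      Disjoint T₀.edgeSet (triangleEdges x y z) := by
  set D := (T₁ ⊔ T₂ ⊔ T₃).spanningCoe.deleteEdges (triangleEdges x y z)
  have hD {T : G.Subgraph} (hT : T ≤ T₁ ⊔ T₂ ⊔ T₃) :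
      T.spanningCoe.deleteEdges (triangleEdges x y z) ≤ D :=
    deleteEdges_mono (Subgraph.spanningCoe_le_of_le hT)
  have mem {T : G.Subgraph} (hT : IsSteinerTree G {x, y, z} T) : x ∈ T.verts ∧ y ∈ T.verts ∧
      z ∈ T.verts := ⟨hT.1 (by simp), hT.1 (by simp), hT.1 (by simp)⟩
  have conn {T : G.Subgraph} (hT : IsSteinerTree G {x, y, z} T) : T.Connected :=
    Subgraph.connected_iff'.2 hT.2.connected
  have hz := ((conn h₁).reachable_deleteEdges_or (mem h₁).1 (mem h₁).2.2 e₁).imp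
    (·.mono (hD (le_sup_left.trans le_sup_left))) (·.mono (hD (le_sup_left.trans le_sup_left)))
  have hy := ((conn h₂).reachable_deleteEdges_or (mem h₂).1 (mem h₂).2.1 e₂).imp
    (·.mono (hD (le_sup_right.trans le_sup_left)))
    (·.mono (hD (le_sup_right.trans le_sup_left)))
  have hx := ((conn h₃).reachable_deleteEdges_or (mem h₃).2.1 (mem h₃).1 e₃).imp
    (·.mono (hD le_sup_right)) (·.mono (hD le_sup_right))
  obtain ⟨hxy, hxz⟩ := reachable_of_triangle hz hy hx
  have hDG : D ≤ G := (deleteEdges_le _).trans (Subgraph.spanningCoe_le _)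
  obtain ⟨T₀, hT₀, hT₀D⟩ := exists_isSteinerTree_le hDG (s := x) (S := {x, y, z})
    (by rintro v (rfl | rfl | rfl); exacts [.rfl, hxy, hxz])
  have hT₀E : T₀.edgeSet ⊆ D.edgeSet := by
    simpa only [Subgraph.edgeSet_spanningCoe] using edgeSet_mono hT₀D
  simp only [D, edgeSet_deleteEdges, Subgraph.edgeSet_spanningCoe, Subgraph.edgeSet_sup] at hT₀E
  exact ⟨T₀, hT₀, fun e he => (hT₀E he).1, Set.disjoint_left.2 fun e he => (hT₀E he).2⟩

end Triangle

lemma exists_packing_disjoint_triangleEdges {ι : Type*} [Fintype ι] {G : SimpleGraph V}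
    {x y z : V} (hxy : x ≠ y) (hxz : x ≠ z) (hyz : y ≠ z) {T : ι → G.Subgraph}
    (hT : ∀ i, IsSteinerTree G {x, y, z} (T i))
    (hdisj : Pairwise (Disjoint on fun i => (T i).edgeSet)) {n : ℕ}
    (hn : n ≤ Fintype.card ι - 2) :
    ∃ T' : Fin n → G.Subgraph,
      (∀ i, IsSteinerTree G {x, y, z} (T' i) ∧
        Disjoint (T' i).edgeSet (triangleEdges x y z)) ∧
      Pairwise (Disjoint on fun i => (T' i).edgeSet) := by
  set E := triangleEdges x y z
  let good (T : G.Subgraph) : Prop := IsSteinerTree G {x, y, z} T ∧ Disjoint T.edgeSet E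
  let ι' := {i // i ∈ (meetingIndices T E)ᶜ}
  have hgood (i : ι') : good (T i) := ⟨hT i, by simpa [meetingIndices] using i.2⟩
  have hgood_disj : Pairwise (Disjoint on fun i : ι' => (T i).edgeSet) :=
    hdisj.comp_of_injective Subtype.val_injective
  have hcard_good : Fintype.card ι' = Fintype.card ι - (meetingIndices T E).card := by simp [ι']
  have hE : E.card = 3 := card_triangleEdges hxy hxz hyz
  rcases (card_meetingIndices_le E hdisj).lt_or_eq with hB | hB
  · have hcard : n ≤ Fintype.card ι' := by omega
    exact exists_fin_subfamily hcard good hgood hgood_disj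
  have owner {e : Sym2 V} (he : e ∈ E) :=
    exists_edgeSet_inter_subset_singleton E hdisj hB.ge he
  obtain ⟨i₁, hi₁, -, e₁⟩ := owner (e := s(x, y)) (by simp [E, triangleEdges])
  obtain ⟨i₂, hi₂, -, e₂⟩ := owner (e := s(x, z)) (by simp [E, triangleEdges])
  obtain ⟨i₃, hi₃, -, e₃⟩ := owner (e := s(y, z)) (by simp [E, triangleEdges])
  obtain ⟨T₀, hT₀, hT₀U, hT₀E⟩ :=
    exists_isSteinerTree_disjoint_triangleEdges (hT i₁) (hT i₂) (hT i₃) e₁ e₂ e₃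
  have hT₀disj (m : ι') : Disjoint T₀.edgeSet (T m).edgeSet := by
    have hm {i : ι} (hi : i ∈ meetingIndices T E) : i ≠ m :=
      fun h => Finset.mem_compl.1 m.2 (h ▸ hi)
    refine Set.disjoint_of_subset_left hT₀U ?_
    simp only [Set.disjoint_union_left]
    exact ⟨⟨hdisj (hm hi₁), hdisj (hm hi₂)⟩, hdisj (hm hi₃)⟩
  have hcard : n ≤ Fintype.card (Option ι') := by
    rw [Fintype.card_option]
    omega
  refine exists_fin_subfamily hcard good (T := fun o => o.elim T₀ fun i => T i) ?_
    (Pairwise.option_elim hgood_disj hT₀disj)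
  rintro (_ | i)
  exacts [⟨hT₀, hT₀E⟩, hgood i]

theorem stmt4_general {V : Type*} (G : SimpleGraph V)
    (k : ℕ) (hk : genEdgeConn G 3 = k)
    (x y z : V) (hxy : x ≠ y) (hxz : x ≠ z) (hyz : y ≠ z) :
    ∃ T : Fin (k - 2) → G.Subgraph,
      (∀ i, IsSteinerTree G {x, y, z} (T i)) ∧
      (∀ i j, i ≠ j → (T i).edgeSet ∩ (T j).edgeSet = ∅) ∧
      (∀ i, ∀ a b, (T i).Adj a b → ¬ (a ∈ ({x, y, z} : Set V) ∧ b ∈ ({x, y, z} : Set V))) := by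
  have hS : ({x, y, z} : Set V).ncard = 3 := Set.ncard_eq_three.2 ⟨x, y, z, hxy, hxz, hyz, rfl⟩
  obtain ⟨T, hT, hdisj⟩ := hasSteinerPacking_of_le_steinerNum
    (hk ▸ hS ▸ genEdgeConn_le_steinerNum G (Set.toFinite {x, y, z}))
  obtain ⟨T', hT', hdisj'⟩ := exists_packing_disjoint_triangleEdges hxy hxz hyz hT
    (fun i j hij => Set.disjoint_iff_inter_eq_empty.2 (hdisj i j hij)) (n := k - 2) (by simp)
  refine ⟨T', fun i => (hT' i).1,
    fun i j hij => Set.disjoint_iff_inter_eq_empty.1 (hdisj' hij), ?_⟩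
  rintro i a b hab ⟨ha, hb⟩
  exact Set.disjoint_left.1 (hT' i).2 hab (mk_mem_triangleEdges ha hb hab.ne)

theorem stmt4 {V : Type*} [Fintype V] (G : SimpleGraph V)
    (k : ℕ) (hk : genEdgeConn G 3 = k) (hk2 : 2 ≤ k)
    (x y z : V) (hxy : x ≠ y) (hxz : x ≠ z) (hyz : y ≠ z) :
    ∃ T : Fin (k - 2) → G.Subgraph,
      (∀ i, IsSteinerTree G {x, y, z} (T i)) ∧
      (∀ i j, i ≠ j → (T i).edgeSet ∩ (T j).edgeSet = ∅) ∧
      (∀ i, ∀ a b, (T i).Adj a b → ¬ (a ∈ ({x, y, z} : Set V) ∧ b ∈ ({x, y, z} : Set V))) :=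
  stmt4_general G k hk x y z hxy hxz hyz
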